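/- The moment generating function of ξ_n satisfies M_n(q) = exp(n(n-1)q/2) · Π_{i=2}^{n} [sinh((n+i)q/2)/((n+i)/2)] / [sinh(iq/2)/(i/2)], where M_n(q) = C_n(e^q)/C_n. -/

import Mathlib

open Polynomial Finset

/-!
Cancelling $[n]_q!^2\,[n+1]_q$ from $[2n]_q!$ leaves $P = \prod_{i=2}^n [n+i]_q/[i]_q$.
Summing the geometric series, $[m]_{e^q} = e^{(m-1)q/2}\sinh(mq/2)/\sinh(q/2)$, while
$[m]_1 = m$; so in $P(e^q)/P(1)$ the factors $\sinh(q/2)$ cancel and each $i$ contributes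
$e^{nq/2}$ times the quotient of normalized sinh's.
-/

noncomputable def qInt (m : ℕ) : Polynomial ℝ :=
  ∑ i ∈ Finset.range m, Polynomial.X ^ i

noncomputable def qFact (m : ℕ) : Polynomial ℝ :=
  ∏ i ∈ Finset.range m, qInt (i + 1)

theorem Finset.prod_Icc_two_succ_eq_prod_range {M : Type*} [CommMonoid M] (g : ℕ → M) (m : ℕ) :
    ∏ i ∈ Icc 2 (m + 1), g i = ∏ i ∈ range m, g (i + 2) := by
  rw [← Ico_add_one_right_eq_Icc, prod_Ico_eq_prod_range, show m + 1 + 1 - 2 = m by omega]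
  exact prod_congr rfl fun i _ => by rw [add_comm]

theorem Finset.prod_range_two_mul_mul_prod_Icc {M : Type*} [CommMonoid M] (f : ℕ → M)
    (h1 : f 1 = 1) (n : ℕ) :
    (∏ i ∈ range (2 * n), f (i + 1)) * ∏ i ∈ Icc 2 n, f i
      = (∏ i ∈ range n, f (i + 1)) ^ 2 * f (n + 1) * ∏ i ∈ Icc 2 n, f (n + i) := by
  rcases n with _ | m
  · simp [h1]
  rw [two_mul, prod_range_add, prod_range_succ', prod_range_succ' (fun i => f (m + 1 + i + 1)),
    prod_Icc_two_succ_eq_prod_range, prod_Icc_two_succ_eq_prod_range, h1]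
  simp only [mul_one, add_zero, pow_two, add_assoc]
  ac_rfl

theorem qInt_eval (m : ℕ) (x : ℝ) : (qInt m).eval x = ∑ i ∈ range m, x ^ i := by
  simp [qInt]

theorem qInt_eval_one (m : ℕ) : (qInt m).eval 1 = m := by
  simp [qInt_eval]

theorem qInt_one : qInt 1 = 1 := by
  simp [qInt]

theorem qInt_eval_pos {x : ℝ} (hx : 0 < x) {m : ℕ} (hm : 0 < m) : 0 < (qInt m).eval x := by
  rw [qInt_eval]
  exact sum_pos (fun i _ => pow_pos hx i) (nonempty_range_iff.mpr hm.ne')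

theorem qInt_ne_zero {m : ℕ} (hm : 0 < m) : qInt m ≠ 0 := fun h => by
  simpa [h] using qInt_eval_pos one_pos hm

theorem qFact_ne_zero (m : ℕ) : qFact m ≠ 0 :=
  prod_ne_zero_iff.mpr fun i _ => qInt_ne_zero i.succ_pos

theorem mul_prod_qInt_eq_prod_qInt {n : ℕ} {P : ℝ[X]}
    (hP : qFact n ^ 2 * qInt (n + 1) * P = qFact (2 * n)) :
    P * ∏ i ∈ Icc 2 n, qInt i = ∏ i ∈ Icc 2 n, qInt (n + i) := by
  refine mul_left_cancel₀ (mul_ne_zero (pow_ne_zero 2 (qFact_ne_zero n)) (qInt_ne_zero n.succ_pos)) ?_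
  rw [← mul_assoc, hP, qFact, qFact, prod_range_two_mul_mul_prod_Icc qInt qInt_one]

theorem eval_eq_prod_qInt_div {n : ℕ} {P : ℝ[X]}
    (hP : qFact n ^ 2 * qInt (n + 1) * P = qFact (2 * n)) {x : ℝ} (hx : 0 < x) :
    P.eval x = ∏ i ∈ Icc 2 n, (qInt (n + i)).eval x / (qInt i).eval x := by
  have hden : ∏ i ∈ Icc 2 n, (qInt i).eval x ≠ 0 :=
    prod_ne_zero_iff.mpr fun i hi => (qInt_eval_pos hx (by grind)).ne'
  rw [prod_div_distrib, eq_div_iff hden]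
  simpa [eval_prod] using congrArg (eval x) (mul_prod_qInt_eq_prod_qInt hP)

theorem Real.exp_sub_one_eq_mul_sinh (y : ℝ) : exp y - 1 = 2 * exp (y / 2) * sinh (y / 2) := by
  have hsq : exp y = exp (y / 2) * exp (y / 2) := by rw [← exp_add, add_halves]
  rw [sinh_eq, exp_neg, hsq]
  field_simp

theorem qInt_eval_exp (m : ℕ) {q : ℝ} (hq : q ≠ 0) :
    (qInt m).eval (Real.exp q)
      = Real.exp (((m : ℝ) - 1) * q / 2) * Real.sinh (m * q / 2) / Real.sinh (q / 2) := by
  have hs : Real.sinh (q / 2) ≠ 0 := Real.sinh_ne_zero.mpr (by simpa using hq)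
  rw [eq_div_iff hs]
  refine mul_left_cancel₀ (mul_ne_zero two_ne_zero (Real.exp_pos (q / 2)).ne') ?_
  have hgeom := geom_sum_mul (Real.exp q) m
  rw [← Real.exp_nat_mul, Real.exp_sub_one_eq_mul_sinh, Real.exp_sub_one_eq_mul_sinh] at hgeom
  calc 2 * Real.exp (q / 2) * ((qInt m).eval (Real.exp q) * Real.sinh (q / 2))
      = 2 * Real.exp (m * q / 2) * Real.sinh (m * q / 2) := by
        rw [qInt_eval, ← hgeom]; ring_nf
    _ = _ := by
        rw [show (m : ℝ) * q / 2 = ((m : ℝ) - 1) * q / 2 + q / 2 by ring, Real.exp_add]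
        ring_nf

theorem qInt_eval_exp_ratio (n i : ℕ) {q : ℝ} (hq : q ≠ 0) :
    ((qInt (n + i)).eval (Real.exp q) / (qInt (n + i)).eval 1)
        / ((qInt i).eval (Real.exp q) / (qInt i).eval 1)
      = Real.exp (n * q / 2) *
        ((Real.sinh ((n + i) * q / 2) / ((n + i) / 2)) / (Real.sinh (i * q / 2) / (i / 2))) := by
  have hs : Real.sinh (q / 2) ≠ 0 := Real.sinh_ne_zero.mpr (by simpa using hq)
  rw [qInt_eval_exp _ hq, qInt_eval_exp _ hq, qInt_eval_one, qInt_eval_one]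
  push_cast
  rw [show ((n : ℝ) + i - 1) * q / 2 = n * q / 2 + (i - 1) * q / 2 by ring, Real.exp_add]
  field_simp

theorem Real.exp_mul_pred_eq_prod_Icc (n : ℕ) (q : ℝ) :
    Real.exp (n * (n - 1) * q / 2) = ∏ _i ∈ Icc 2 n, Real.exp (n * q / 2) := by
  rw [prod_const, Nat.card_Icc, ← Real.exp_nat_mul]
  rcases n with _ | n
  · simp
  · congr 1; push_cast; ring

theorem qCatalan_mgf_product_general (n : ℕ) (P : Polynomial ℝ)
    (hP : qFact n ^ 2 * qInt (n + 1) * P = qFact (2 * n)) (q : ℝ) (hq : q ≠ 0) :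
    P.eval (Real.exp q) / P.eval 1
      = Real.exp ((n : ℝ) * ((n : ℝ) - 1) * q / 2) *
        ∏ i ∈ Finset.Icc 2 n,
          (Real.sinh (((n : ℝ) + (i : ℝ)) * q / 2) / (((n : ℝ) + (i : ℝ)) / 2)) /
            (Real.sinh ((i : ℝ) * q / 2) / ((i : ℝ) / 2)) := by
  rw [eval_eq_prod_qInt_div hP (Real.exp_pos q), eval_eq_prod_qInt_div hP one_pos,
    ← prod_div_distrib, Real.exp_mul_pred_eq_prod_Icc, ← prod_mul_distrib]
  refine prod_congr rfl fun i _ => ?_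
  rw [div_div_div_comm, qInt_eval_exp_ratio n i hq]

/-- The moment generating function of $ξ_n$ satisfies
$M_n(q) = e^{n(n-1)q/2} ∏_{i=2}^n \frac{\sinh((n+i)q/2)/((n+i)/2)}{\sinh(iq/2)/(i/2)}$. -/
theorem qCatalan_mgf_product (n : ℕ) (hn : 2 ≤ n) (P : Polynomial ℝ)
    (hP : qFact n ^ 2 * qInt (n + 1) * P = qFact (2 * n)) (q : ℝ) (hq : q ≠ 0) :
    P.eval (Real.exp q) / P.eval 1
      = Real.exp ((n : ℝ) * ((n : ℝ) - 1) * q / 2) *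
        ∏ i ∈ Finset.Icc 2 n,
          (Real.sinh (((n : ℝ) + (i : ℝ)) * q / 2) / (((n : ℝ) + (i : ℝ)) / 2)) /
            (Real.sinh ((i : ℝ) * q / 2) / ((i : ℝ) / 2)) :=
  qCatalan_mgf_product_general n P hP q hq
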